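/- arXiv:1208.1513 — 3 statements merged into one kernel-verified Lean document; each statement's English description precedes it below -/
import Mathlib

section
/- Given a family of manifolds M₁,...,M_N and smooth maps s_j : ∏_i M_i → M_j × U_j with pr₁ ∘ s_j = pr_j (the j-th projection of the product), the interconnection map I, defined componentwise by I(F₁,...,F_N)_j := F_j ∘ s_j, is a well-defined linear map from ∏_j Control(M_j × U_j → M_j) to the space of vector fields Γ(T(∏_i M_i)), i.e. for every (F₁,...,F_N), the map x ↦ (F_j(s_j(x)))_j is a vector field on ∏_i M_i. -/
/-!
Charts of a finite product of manifolds are products of charts, so every coordinate change of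
the product is the product of the coordinate changes of the factors, and so is its derivative.
Hence the trivialization of `T(∏ i, M i)` acts componentwise, and a section of it is smooth as
soon as each component `x ↦ (x j, X_j x) ∈ T M_j` is. For the interconnection the `j`-th
component is `(q ↦ (q.1, F_j q)) ∘ s_j`, smooth as a composite because `pr₁ ∘ s_j = pr_j`.
-/

open Manifold Set

def interconnection {R : Type*} [Semiring R] {ι X : Type*} {Y E : ι → Type*}
    [∀ i, AddCommMonoid (E i)] [∀ i, Module R (E i)] (s : ∀ i, X → Y i) :
    (∀ i, Y i → E i) →ₗ[R] (X → ∀ i, E i) where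
  toFun F x i := F i (s i x)
  map_add' _ _ := rfl
  map_smul' _ _ := rfl

section PiTangent

variable {𝕜 : Type*} [NontriviallyNormedField 𝕜] {ι : Type*} [Fintype ι]
  {E : ι → Type*} [∀ i, NormedAddCommGroup (E i)] [∀ i, NormedSpace 𝕜 (E i)]
  {H : ι → Type*} [∀ i, TopologicalSpace (H i)] {I : ∀ i, ModelWithCorners 𝕜 (E i) (H i)}
  {M : ι → Type*} [∀ i, TopologicalSpace (M i)] [∀ i, ChartedSpace (H i) (M i)]
  [∀ i, IsManifold (I i) 1 (M i)] [IsManifold (ModelWithCorners.pi I) 1 (∀ i, M i)]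

theorem tangentCoordChange_pi {x y z : ∀ i, M i}
    (hz : ∀ i, z i ∈ (extChartAt (I i) (x i)).source ∩ (extChartAt (I i) (y i)).source)
    (v : ∀ i, E i) :
    tangentCoordChange (ModelWithCorners.pi I) x y z v =
      fun i => tangentCoordChange (I i) (x i) (y i) (z i) (v i) := by
  have hderiv : HasFDerivWithinAt
      (extChartAt (ModelWithCorners.pi I) y ∘ (extChartAt (ModelWithCorners.pi I) x).symm)
      (ContinuousLinearMap.pi fun i =>
        (tangentCoordChange (I i) (x i) (y i) (z i)).comp (ContinuousLinearMap.proj i))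
      (range (ModelWithCorners.pi I)) (extChartAt (ModelWithCorners.pi I) x z) := by
    refine hasFDerivWithinAt_pi'.2 fun i => ?_
    refine (hasFDerivWithinAt_tangentCoordChange (hz i)).comp
      (extChartAt (ModelWithCorners.pi I) x z)
      (ContinuousLinearMap.proj (R := 𝕜) (φ := E) i).hasFDerivWithinAt ?_
    rintro _ ⟨w, rfl⟩
    exact mem_range_self _
  have hz' : z ∈ (extChartAt (ModelWithCorners.pi I) x).source ∩
      (extChartAt (ModelWithCorners.pi I) y).source := by
    simp only [extChartAt_source] at hz ⊢
    exact ⟨fun i _ => (hz i).1, fun i _ => (hz i).2⟩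
  rw [((ModelWithCorners.pi I).uniqueDiffOn _ (mem_range_self _)).eq
    (hasFDerivWithinAt_tangentCoordChange hz') hderiv]
  rfl

theorem contMDiff_pi_tangent_section {n : WithTop ℕ∞} {V : ∀ i, (∀ j, M j) → E i}
    (hV : ∀ i, ContMDiff (ModelWithCorners.pi I) (I i).tangent n
      (fun x => (⟨x i, V i x⟩ : TangentBundle (I i) (M i)))) :
    ContMDiff (ModelWithCorners.pi I) (ModelWithCorners.pi I).tangent n
      (fun x => (⟨x, fun i => V i x⟩ : TangentBundle (ModelWithCorners.pi I) (∀ i, M i))) := by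
  intro x₀
  refine (Bundle.contMDiffAt_section (E := TangentSpace (ModelWithCorners.pi I))
    (s := fun x i => V i x) x₀).2 ?_
  have hcomponents : ∀ i, ContMDiffAt (ModelWithCorners.pi I) 𝓘(𝕜, E i) n
      (fun x => (trivializationAt (E i) (TangentSpace (I i)) (x₀ i) ⟨x i, V i x⟩).2) x₀ :=
    fun i => (Bundle.contMDiffAt_totalSpace.1 (hV i x₀)).2
  refine (contMDiffAt_pi_space.2 hcomponents).congr_of_eventuallyEq ?_
  filter_upwards [extChartAt_source_mem_nhds (I := ModelWithCorners.pi I) x₀] with x hx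
  simp only [extChartAt_source] at hx
  -- both trivialization coordinates are, by definition, values of `tangentCoordChange`
  exact tangentCoordChange_pi
    (fun i => ⟨mem_extChartAt_source _, by simpa using hx i (mem_univ i)⟩) _

end PiTangent

theorem interconnection_well_defined_general {ι : Type} [Fintype ι]
    (E : ι → Type) [∀ i, NormedAddCommGroup (E i)] [∀ i, NormedSpace ℝ (E i)]
    (H : ι → Type) [∀ i, TopologicalSpace (H i)]
    (I : ∀ i, ModelWithCorners ℝ (E i) (H i))
    (M : ι → Type) [∀ i, TopologicalSpace (M i)] [∀ i, ChartedSpace (H i) (M i)]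
    [∀ i, IsManifold (I i) (⊤ : ℕ∞) (M i)]
    -- the control manifolds U i
    (F' : ι → Type) [∀ i, NormedAddCommGroup (F' i)] [∀ i, NormedSpace ℝ (F' i)]
    (K : ι → Type) [∀ i, TopologicalSpace (K i)]
    (J : ∀ i, ModelWithCorners ℝ (F' i) (K i))
    (U : ι → Type) [∀ i, TopologicalSpace (U i)] [∀ i, ChartedSpace (K i) (U i)]
    [IsManifold (ModelWithCorners.pi I) (⊤ : ℕ∞) (∀ i, M i)]
    -- the interconnection data s_j
    (s : ∀ j : ι, (∀ i, M i) → M j × U j)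
    (hs : ∀ j, ContMDiff (ModelWithCorners.pi I) ((I j).prod (J j)) (⊤ : ℕ∞) (s j))
    (hs1 : ∀ j x, (s j x).1 = x j) :
    ∃ Int : (∀ j : ι, (M j × U j → E j)) →ₗ[ℝ] ((∀ i, M i) → ∀ j, E j),
      (∀ F : ∀ j : ι, M j × U j → E j, Int F = fun x j => F j (s j x)) ∧
      ∀ F : ∀ j : ι, M j × U j → E j,
        (∀ j, ContMDiff ((I j).prod (J j)) (I j).tangent (⊤ : ℕ∞)
            (fun q => (⟨q.1, F j q⟩ : TangentBundle (I j) (M j)))) →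
          ContMDiff (ModelWithCorners.pi I) (ModelWithCorners.pi I).tangent (⊤ : ℕ∞)
            (fun x => (⟨x, fun j => F j (s j x)⟩ :
              TangentBundle (ModelWithCorners.pi I) (∀ i, M i))) := by
  refine ⟨interconnection s, fun F => rfl, fun F hF => contMDiff_pi_tangent_section fun j => ?_⟩
  exact ((hF j).comp (hs j)).congr fun x => by rw [Function.comp_apply, hs1]

/-- Given a finite family of manifolds `M i` (with control manifolds `U i`)
and smooth maps `s j : ∏ i, M i → M j × U j` with `pr₁ ∘ s j = pr_j`, the interconnection
map `I`, defined componentwise by `I(F)_j := F j ∘ s j`, is a well-defined linear map from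
`∏ j, Control (M j × U j → M j)` to the vector fields on `∏ i, M i`: it is linear, and for
every tuple `F` of smooth open systems the map `x ↦ (F j (s j x))_j` is a (smooth) vector
field on `∏ i, M i`. -/
theorem interconnection_well_defined {ι : Type} [Fintype ι]
    (E : ι → Type) [∀ i, NormedAddCommGroup (E i)] [∀ i, NormedSpace ℝ (E i)]
    (H : ι → Type) [∀ i, TopologicalSpace (H i)]
    (I : ∀ i, ModelWithCorners ℝ (E i) (H i))
    (M : ι → Type) [∀ i, TopologicalSpace (M i)] [∀ i, ChartedSpace (H i) (M i)]
    [∀ i, IsManifold (I i) (⊤ : ℕ∞) (M i)]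
    -- the control manifolds U i
    (F' : ι → Type) [∀ i, NormedAddCommGroup (F' i)] [∀ i, NormedSpace ℝ (F' i)]
    (K : ι → Type) [∀ i, TopologicalSpace (K i)]
    (J : ∀ i, ModelWithCorners ℝ (F' i) (K i))
    (U : ι → Type) [∀ i, TopologicalSpace (U i)] [∀ i, ChartedSpace (K i) (U i)]
    [∀ i, IsManifold (J i) (⊤ : ℕ∞) (U i)]
    [IsManifold (ModelWithCorners.pi I) (⊤ : ℕ∞) (∀ i, M i)]
    -- the interconnection data s_j
    (s : ∀ j : ι, (∀ i, M i) → M j × U j)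
    (hs : ∀ j, ContMDiff (ModelWithCorners.pi I) ((I j).prod (J j)) (⊤ : ℕ∞) (s j))
    (hs1 : ∀ j x, (s j x).1 = x j) :
    ∃ Int : (∀ j : ι, (M j × U j → E j)) →ₗ[ℝ] ((∀ i, M i) → ∀ j, E j),
      (∀ F : ∀ j : ι, M j × U j → E j, Int F = fun x j => F j (s j x)) ∧
      ∀ F : ∀ j : ι, M j × U j → E j,
        (∀ j, ContMDiff ((I j).prod (J j)) (I j).tangent (⊤ : ℕ∞)
            (fun q => (⟨q.1, F j q⟩ : TangentBundle (I j) (M j)))) →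
          ContMDiff (ModelWithCorners.pi I) (ModelWithCorners.pi I).tangent (⊤ : ℕ∞)
            (fun x => (⟨x, fun j => F j (s j x)⟩ :
              TangentBundle (ModelWithCorners.pi I) (∀ i, M i))) :=
  interconnection_well_defined_general E H I M F' K J U s hs hs1
end

section
/- Let φ : (G,P) → (G',P') be a fibration of networks of manifolds. Then the pullback map φ* : Ctrl(G',P') → Ctrl(G,P), defined componentwise by (φ*w')_a := D(P(φ|_{a})) ∘ w'_{φ(a)} ∘ (Pφ_a)⁻¹, is a well-defined linear map. -/
/-- A finite directed multigraph. -/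
structure NetGraph where
  V : Type
  E : Type
  [fV : Fintype V]
  [fE : Fintype E]
  [dV : DecidableEq V]
  [dE : DecidableEq E]
  s : E → V
  t : E → V

attribute [instance] NetGraph.fV NetGraph.fE NetGraph.dV NetGraph.dE

/-- A map of directed graphs. -/
@[ext]
structure GraphHom (G G' : NetGraph) where
  vmap : G.V → G'.V
  emap : G.E → G'.E
  src : ∀ e, vmap (G.s e) = G'.s (emap e)
  tgt : ∀ e, vmap (G.t e) = G'.t (emap e)

/-- Identity graph map. -/
def GraphHom.id (G : NetGraph) : GraphHom G G :=
  ⟨fun a => a, fun e => e, fun _ => rfl, fun _ => rfl⟩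

/-- Composition of graph maps. -/
def GraphHom.comp {G G' G'' : NetGraph} (ψ : GraphHom G' G'') (φ : GraphHom G G') :
    GraphHom G G'' :=
  ⟨fun a => ψ.vmap (φ.vmap a), fun e => ψ.emap (φ.emap e),
   fun e => (congrArg ψ.vmap (φ.src e)).trans (ψ.src _),
   fun e => (congrArg ψ.vmap (φ.tgt e)).trans (ψ.tgt _)⟩

/-- The map on total phase spaces induced by a graph map (`ℙφ`),
given a phase space function `P'` on the codomain graph; the phase space
function on the domain is `P' ∘ φ.vmap`. -/
def Pmap {G G' : NetGraph} (P' : G'.V → Type _) (φ : GraphHom G G') :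
    (∀ a' : G'.V, P' a') → ∀ a : G.V, P' (φ.vmap a) :=
  fun x a => x (φ.vmap a)

/-- The input tree `I(a)` of a vertex `a`: vertices are `a` (the `Sum.inl` vertex)
together with the edges of `G` targeting `a`; edges are the pairs `(a, γ)` with
`t γ = a`, going from `γ` to `a`. -/
@[reducible] def NetGraph.inputTree (G : NetGraph) (a : G.V) : NetGraph where
  V := Unit ⊕ {e : G.E // G.t e = a}
  E := {e : G.E // G.t e = a}
  s := fun e => Sum.inr e
  t := fun _ => Sum.inl ()

/-- The canonical graph map `ξ_a : I(a) → G`. -/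
def NetGraph.xi (G : NetGraph) (a : G.V) : GraphHom (G.inputTree a) G where
  vmap := fun v => match v with
    | Sum.inl _ => a
    | Sum.inr e => G.s e.1
  emap := fun e => e.1
  src := fun _ => rfl
  tgt := fun e => e.2.symm

/-- The graph with a single vertex and no edges. -/
def singleGraph : NetGraph where
  V := Unit
  E := Empty
  s := Empty.elim
  t := Empty.elim

/-- The inclusion `ι_a : {a} → G`. -/
def NetGraph.iota (G : NetGraph) (a : G.V) : GraphHom singleGraph G :=
  ⟨fun _ => a, Empty.elim, fun e => e.elim, fun e => e.elim⟩

/-- The inclusion `j_a : {a} → I(a)`. -/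
def NetGraph.jmap (G : NetGraph) (a : G.V) : GraphHom singleGraph (G.inputTree a) :=
  ⟨fun _ => Sum.inl (), Empty.elim, fun e => e.elim, fun e => e.elim⟩

/-- The induced map of input trees `φ_a : I(a) → I(φ(a))`. -/
def GraphHom.inputHom {G G' : NetGraph} (φ : GraphHom G G') (a : G.V) :
    GraphHom (G.inputTree a) (G'.inputTree (φ.vmap a)) where
  vmap := fun v => match v with
    | Sum.inl _ => Sum.inl ()
    | Sum.inr e => Sum.inr ⟨φ.emap e.1, by rw [← φ.tgt, e.2]⟩
  emap := fun e => ⟨φ.emap e.1, by rw [← φ.tgt, e.2]⟩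
  src := fun _ => rfl
  tgt := fun _ => rfl

/-- A graph fibration: for every vertex `a` of `G` and every edge `e'` of `G'`
ending at `φ(a)` there is a unique edge `e` of `G` ending at `a` with `φ(e) = e'`. -/
def IsFibration {G G' : NetGraph} (φ : GraphHom G G') : Prop :=
  ∀ (a : G.V) (e' : G'.E), G'.t e' = φ.vmap a →
    ∃! e : G.E, G.t e = a ∧ φ.emap e = e'

/-- For a graph fibration, the inverse of the bijection `t⁻¹(a) → t⁻¹(φ(a))`. -/
noncomputable def fibSection {G G' : NetGraph} {φ : GraphHom G G'} (hφ : IsFibration φ)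
    (a : G.V) (e' : {e' : G'.E // G'.t e' = φ.vmap a}) : {e : G.E // G.t e = a} :=
  ⟨(hφ a e'.1 e'.2).exists.choose, (hφ a e'.1 e'.2).exists.choose_spec.1⟩

theorem fibSection_spec {G G' : NetGraph} {φ : GraphHom G G'} (hφ : IsFibration φ)
    (a : G.V) (e' : {e' : G'.E // G'.t e' = φ.vmap a}) :
    φ.emap (fibSection hφ a e').1 = e'.1 :=
  (hφ a e'.1 e'.2).exists.choose_spec.2

/-- The pullback of a tuple of open systems along a graph fibration:
`(φ*w')_a = w'_{φ(a)} ∘ (ℙφ_a)⁻¹`, written out explicitly using the inverse of the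
input tree isomorphism `φ_a : I(a) ≅ I(φ(a))`. -/
noncomputable def pullbackCtrl {G G' : NetGraph} {φ : GraphHom G G'} (hφ : IsFibration φ)
    (M' : G'.V → Type _) (E' : G'.V → Type _)
    (w' : ∀ a' : G'.V, (∀ v : (G'.inputTree a').V, M' ((G'.xi a').vmap v)) → E' a')
    (a : G.V) (y : ∀ v : (G.inputTree a).V, M' (φ.vmap ((G.xi a).vmap v))) :
    E' (φ.vmap a) :=
  w' (φ.vmap a) (fun v => match v with
    | Sum.inl _ => y (Sum.inl ())
    | Sum.inr e' =>
        cast (congrArg M' ((φ.src _).trans (congrArg G'.s (fibSection_spec hφ a e'))))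
          (y (Sum.inr (fibSection hφ a e'))))

open Manifold Topology

/-!
For a fibration, `φ_a : I(a) → I(φ(a))` is an isomorphism, so `(ℙφ_a)⁻¹` merely permutes the
coordinates of a point of a finite product of manifolds (up to casts along the equalities
`P(a) = P'(φ(a))`). Such a reindexing is smooth, being the continuous linear map `z ↦ z ∘ σ` in
charts, and the pullback `w' ↦ w'_{φ(a)} ∘ (ℙφ_a)⁻¹` is precomposition, hence linear.
-/

section Reindex

variable {𝕜 : Type*} [NontriviallyNormedField 𝕜] {ι κ : Type} [Fintype ι] [Fintype κ]

theorem apply_mem_extChartAt_target_of_mem_pi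
    {E : ι → Type} [∀ i, NormedAddCommGroup (E i)] [∀ i, NormedSpace 𝕜 (E i)]
    {H : ι → Type} [∀ i, TopologicalSpace (H i)] {I : ∀ i, ModelWithCorners 𝕜 (E i) (H i)}
    {M : ι → Type} [∀ i, TopologicalSpace (M i)] [∀ i, ChartedSpace (H i) (M i)]
    {x : ∀ i, M i} {z : ∀ i, E i} (hz : z ∈ (extChartAt (ModelWithCorners.pi I) x).target)
    (i : ι) : z i ∈ (extChartAt (I i) (x i)).target := by
  rw [extChartAt_target] at hz ⊢
  simp only [piChartedSpace_chartAt, OpenPartialHomeomorph.pi_toPartialHomeomorph,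
    PartialEquiv.pi_target, ModelWithCorners.pi] at hz
  obtain ⟨hsource, w, hw⟩ := hz
  exact ⟨hsource i (Set.mem_univ i), w i, congrFun hw i⟩

theorem contMDiff_pi_reindex
    {E : ι → Type} [∀ i, NormedAddCommGroup (E i)] [∀ i, NormedSpace 𝕜 (E i)]
    {H : ι → Type} [∀ i, TopologicalSpace (H i)] (I : ∀ i, ModelWithCorners 𝕜 (E i) (H i))
    (M : ι → Type) [∀ i, TopologicalSpace (M i)] [∀ i, ChartedSpace (H i) (M i)]
    (σ : κ → ι) {n : WithTop ℕ∞} :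
    ContMDiff (ModelWithCorners.pi I) (ModelWithCorners.pi fun k => I (σ k)) n
      (fun (y : ∀ i, M i) (k : κ) => y (σ k)) := by
  intro x
  rw [ContMDiffAt, contMDiffWithinAt_iff']
  refine ⟨(continuous_pi fun k => continuous_apply (σ k)).continuousWithinAt, ?_⟩
  have hlinear : ContDiff 𝕜 n (fun (z : ∀ i, E i) (k : κ) => z (σ k)) :=
    (ContinuousLinearMap.pi fun k =>
      ContinuousLinearMap.proj (R := 𝕜) (φ := E) (σ k)).contDiff
  refine hlinear.contDiffWithinAt.congr (fun z hz => funext fun k => ?_) (funext fun k => ?_)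
  · exact PartialEquiv.right_inv _ (apply_mem_extChartAt_target_of_mem_pi hz.1 (σ k))
  · exact congrArg (extChartAt (I (σ k)) (x (σ k)))
      (PartialEquiv.left_inv _ (mem_extChartAt_source (x (σ k))))

theorem contMDiff_pi_reindex_cast {V : Type}
    {E : V → Type} [∀ v, NormedAddCommGroup (E v)] [∀ v, NormedSpace 𝕜 (E v)]
    {H : V → Type} [∀ v, TopologicalSpace (H v)] (I : ∀ v, ModelWithCorners 𝕜 (E v) (H v))
    (M : V → Type) [∀ v, TopologicalSpace (M v)] [∀ v, ChartedSpace (H v) (M v)]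
    {f : ι → V} {g : κ → V} (σ : κ → ι) (h : ∀ k, f (σ k) = g k) {n : WithTop ℕ∞} :
    ContMDiff (ModelWithCorners.pi fun i => I (f i)) (ModelWithCorners.pi fun k => I (g k)) n
      (fun (y : ∀ i, M (f i)) (k : κ) => cast (congrArg M (h k)) (y (σ k))) := by
  obtain rfl : g = f ∘ σ := funext fun k => (h k).symm
  exact contMDiff_pi_reindex (fun i => I (f i)) (fun i => M (f i)) σ

end Reindex

namespace IsFibration

variable {G G' : NetGraph} {φ : GraphHom G G'} (hφ : IsFibration φ)

noncomputable def inputVertexInv (a : G.V) :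
    (G'.inputTree (φ.vmap a)).V → (G.inputTree a).V
  | Sum.inl _ => Sum.inl ()
  | Sum.inr e' => Sum.inr (fibSection hφ a e')

theorem inputHom_vmap_inputVertexInv (a : G.V) (v' : (G'.inputTree (φ.vmap a)).V) :
    (φ.inputHom a).vmap (hφ.inputVertexInv a v') = v' := by
  rcases v' with ⟨⟩ | e'
  · rfl
  · exact congrArg Sum.inr (Subtype.ext (fibSection_spec hφ a e'))

theorem vmap_xi_inputVertexInv (a : G.V) (v' : (G'.inputTree (φ.vmap a)).V) :
    φ.vmap ((G.xi a).vmap (hφ.inputVertexInv a v')) = (G'.xi (φ.vmap a)).vmap v' := by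
  rcases v' with ⟨⟩ | e'
  · rfl
  · exact (φ.src _).trans (congrArg G'.s (fibSection_spec hφ a e'))

/-- The inverse `(ℙφ_a)⁻¹` of the map of input phase spaces induced by `φ_a`. -/
noncomputable def inputStateInv (M' : G'.V → Type) (a : G.V)
    (y : ∀ v : (G.inputTree a).V, M' (φ.vmap ((G.xi a).vmap v))) :
    ∀ v' : (G'.inputTree (φ.vmap a)).V, M' ((G'.xi (φ.vmap a)).vmap v') :=
  fun v' => cast (congrArg M' (hφ.vmap_xi_inputVertexInv a v')) (y (hφ.inputVertexInv a v'))

theorem inputStateInv_eq_of_heq {M' : G'.V → Type} {a : G.V}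
    {y : ∀ v : (G.inputTree a).V, M' (φ.vmap ((G.xi a).vmap v))}
    {z : ∀ v' : (G'.inputTree (φ.vmap a)).V, M' ((G'.xi (φ.vmap a)).vmap v')}
    (hz : ∀ v, HEq (z ((φ.inputHom a).vmap v)) (y v)) : hφ.inputStateInv M' a y = z :=
  funext fun v' => eq_of_heq <| (cast_heq _ _).trans <|
    (hz (hφ.inputVertexInv a v')).symm.trans
      (congr_arg_heq z (hφ.inputHom_vmap_inputVertexInv a v'))

theorem pullbackCtrl_eq (M' E' : G'.V → Type)
    (w' : ∀ a' : G'.V, (∀ v : (G'.inputTree a').V, M' ((G'.xi a').vmap v)) → E' a')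
    (a : G.V) (y : ∀ v : (G.inputTree a).V, M' (φ.vmap ((G.xi a).vmap v))) :
    pullbackCtrl hφ M' E' w' a y = w' (φ.vmap a) (hφ.inputStateInv M' a y) := by
  refine congrArg (w' (φ.vmap a)) (funext fun v' => ?_)
  rcases v' with ⟨⟩ | e' <;> rfl

noncomputable def pullbackCtrlLinearMap (R : Type*) [Semiring R] (M' E' : G'.V → Type)
    [∀ a', AddCommMonoid (E' a')] [∀ a', Module R (E' a')] :
    (∀ a' : G'.V, (∀ v : (G'.inputTree a').V, M' ((G'.xi a').vmap v)) → E' a') →ₗ[R]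
      (∀ a : G.V, (∀ v : (G.inputTree a).V, M' (φ.vmap ((G.xi a).vmap v))) →
        E' (φ.vmap a)) where
  toFun := pullbackCtrl hφ M' E'
  map_add' _ _ := rfl
  map_smul' _ _ := rfl

theorem contMDiff_inputStateInv {𝕜 : Type*} [NontriviallyNormedField 𝕜]
    {E' : G'.V → Type} [∀ a', NormedAddCommGroup (E' a')] [∀ a', NormedSpace 𝕜 (E' a')]
    {H' : G'.V → Type} [∀ a', TopologicalSpace (H' a')]
    (I' : ∀ a', ModelWithCorners 𝕜 (E' a') (H' a'))
    (M' : G'.V → Type) [∀ a', TopologicalSpace (M' a')] [∀ a', ChartedSpace (H' a') (M' a')]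
    (a : G.V) {n : WithTop ℕ∞} :
    ContMDiff (ModelWithCorners.pi fun v : (G.inputTree a).V => I' (φ.vmap ((G.xi a).vmap v)))
      (ModelWithCorners.pi fun v' : (G'.inputTree (φ.vmap a)).V =>
        I' ((G'.xi (φ.vmap a)).vmap v')) n
      (hφ.inputStateInv M' a) :=
  contMDiff_pi_reindex_cast I' M' (hφ.inputVertexInv a) (hφ.vmap_xi_inputVertexInv a)

end IsFibration

/-- For a fibration `φ : (G,P) → (G',P')` of networks of manifolds, the
pullback map `φ* : Ctrl(G',P') → Ctrl(G,P)`, with components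
`(φ*w')_a = D(ℙ(φ|_a)) ∘ w'_{φ(a)} ∘ (ℙφ_a)⁻¹` (here `ℙ(φ|_a)` is the identity and
`ℙφ_a` is the diffeomorphism induced by the input tree isomorphism `φ_a`), is a
well-defined linear map: it is linear, its components are characterized by
`(φ*w')_a (y) = w'_{φ(a)} (z)` whenever `z ∘ φ_a = y`, and it sends smooth open systems to
smooth open systems. -/
theorem pullback_well_defined_linear {G G' : NetGraph} (φ : GraphHom G G')
    (hφ : IsFibration φ)
    (E' : G'.V → Type) [∀ a', NormedAddCommGroup (E' a')] [∀ a', NormedSpace ℝ (E' a')]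
    (H' : G'.V → Type) [∀ a', TopologicalSpace (H' a')]
    (I' : ∀ a', ModelWithCorners ℝ (E' a') (H' a'))
    (M' : G'.V → Type) [∀ a', TopologicalSpace (M' a')] [∀ a', ChartedSpace (H' a') (M' a')]
    [∀ a', IsManifold (I' a') ((⊤ : ℕ∞) : WithTop ℕ∞) (M' a')] :
    ∃ pull :
      (∀ a' : G'.V, (∀ v : (G'.inputTree a').V, M' ((G'.xi a').vmap v)) → E' a') →ₗ[ℝ]
      (∀ a : G.V, (∀ v : (G.inputTree a).V, M' (φ.vmap ((G.xi a).vmap v))) →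
        E' (φ.vmap a)),
      -- characterization: `(φ*w')_a (y) = w'_{φ(a)} ((ℙφ_a)⁻¹⁻¹... z)` whenever
      -- `z ∘ ℙφ_a = y`, i.e. `z (φ_a v) = y v` for all vertices `v` of `I(a)`
      (∀ (w' : ∀ a' : G'.V,
          (∀ v : (G'.inputTree a').V, M' ((G'.xi a').vmap v)) → E' a')
        (a : G.V) (y : ∀ v : (G.inputTree a).V, M' (φ.vmap ((G.xi a).vmap v)))
        (z : ∀ v' : (G'.inputTree (φ.vmap a)).V, M' ((G'.xi (φ.vmap a)).vmap v')),
        (∀ v : (G.inputTree a).V, HEq (z ((φ.inputHom a).vmap v)) (y v)) →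
          pull w' a y = w' (φ.vmap a) z) ∧
      -- well-definedness: smooth open systems pull back to smooth open systems
      (∀ w' : ∀ a' : G'.V,
          (∀ v : (G'.inputTree a').V, M' ((G'.xi a').vmap v)) → E' a',
        (∀ a' : G'.V, ContMDiff
            (ModelWithCorners.pi fun v : (G'.inputTree a').V => I' ((G'.xi a').vmap v))
            (I' a').tangent (⊤ : ℕ∞)
            (fun y => (⟨y (Sum.inl ()), w' a' y⟩ : TangentBundle (I' a') (M' a')))) →
          ∀ a : G.V, ContMDiff
            (ModelWithCorners.pi fun v : (G.inputTree a).V =>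
              I' (φ.vmap ((G.xi a).vmap v)))
            (I' (φ.vmap a)).tangent (⊤ : ℕ∞)
            (fun y => (⟨y (Sum.inl ()), pull w' a y⟩ :
              TangentBundle (I' (φ.vmap a)) (M' (φ.vmap a))))) := by
  refine ⟨hφ.pullbackCtrlLinearMap ℝ M' E', fun w' a y z hz => ?_, fun w' hw' a => ?_⟩
  · exact (hφ.pullbackCtrl_eq M' E' w' a y).trans
      (congrArg (w' (φ.vmap a)) (hφ.inputStateInv_eq_of_heq hz))
  · have hcomp := (hw' (φ.vmap a)).comp (hφ.contMDiff_inputStateInv I' M' a)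
    exact hcomp.congr fun y => congrArg _ (hφ.pullbackCtrl_eq M' E' w' a y)
end

section
/- Let φ : (G,P) → (G',P') be a fibration of networks of manifolds and w' ∈ Ctrl(G',P') a tuple of open systems. Then the induced map Pφ : PG' → PG intertwines the interconnected vector fields: D(Pφ) ∘ I'(w') = I(φ*w') ∘ Pφ, where I', I are the interconnection maps of (G',P') and (G,P). Hence Pφ : (PG', I'(w')) → (PG, I(φ*w')) is a map of dynamical systems. -/
open Manifold Topology

/-! In product charts `ℙφ` is the restriction of a linear coordinate projection, so its
derivative acts on tangent vectors again as `ℙφ`. The fibration property makes each `φ_a` an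
isomorphism of input trees, so the pulled-back system `(φ*w')_a` evaluated at `ℙφ x'` receives
exactly the inputs `w'_{φ(a)}` receives at `x'`. -/

open Set Filter

section Reindex

variable {𝕜 : Type*} [NontriviallyNormedField 𝕜] {ι κ : Type*} [Fintype ι] [Fintype κ]
  {E : ι → Type*} [∀ i, NormedAddCommGroup (E i)] [∀ i, NormedSpace 𝕜 (E i)]
  {H : ι → Type*} [∀ i, TopologicalSpace (H i)] (I : ∀ i, ModelWithCorners 𝕜 (E i) (H i))
  {M : ι → Type*} [∀ i, TopologicalSpace (M i)] [∀ i, ChartedSpace (H i) (M i)]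

theorem ModelWithCorners.range_pi :
    range (ModelWithCorners.pi I) = univ.pi fun i => range (I i) :=
  Set.range_piMap _

theorem pi_extChartAt_target_mem_nhdsWithin (x : ∀ i, M i) :
    (univ.pi fun i => (extChartAt (I i) (x i)).target) ∈
      𝓝[range (ModelWithCorners.pi I)] (extChartAt (ModelWithCorners.pi I) x x) := by
  rw [ModelWithCorners.range_pi, nhdsWithin_pi_univ_eq]
  exact pi_mem_pi finite_univ fun i _ => extChartAt_target_mem_nhdsWithin (x i)

theorem hasMFDerivAt_reindex (σ : κ → ι) (x : ∀ i, M i) :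
    HasMFDerivAt (ModelWithCorners.pi I) (ModelWithCorners.pi fun k => I (σ k))
      (fun y k => y (σ k)) x
      (ContinuousLinearMap.pi fun k => ContinuousLinearMap.proj (R := 𝕜) (σ k)) := by
  refine ⟨(continuous_pi fun k => continuous_apply (σ k)).continuousAt, ?_⟩
  set L : (∀ i, E i) →L[𝕜] (∀ k, E (σ k)) :=
    ContinuousLinearMap.pi fun k => ContinuousLinearMap.proj (R := 𝕜) (σ k)
  have hL : ∀ y ∈ univ.pi fun i => (extChartAt (I i) (x i)).target,
      writtenInExtChartAt (ModelWithCorners.pi I) (ModelWithCorners.pi fun k => I (σ k)) x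
        (fun y k => y (σ k)) y = L y := fun y hy =>
    funext fun k => (extChartAt (I (σ k)) (x (σ k))).right_inv (hy (σ k) (mem_univ _))
  exact L.hasFDerivAt.hasFDerivWithinAt.congr_of_eventuallyEq
    (eventually_of_mem (pi_extChartAt_target_mem_nhdsWithin I x) hL)
    (hL _ fun i _ => mem_extChartAt_target (x i))

end Reindex

theorem mfderiv_Pmap {G G' : NetGraph} (φ : GraphHom G G')
    (E' : G'.V → Type*) [∀ a', NormedAddCommGroup (E' a')] [∀ a', NormedSpace ℝ (E' a')]
    (H' : G'.V → Type*) [∀ a', TopologicalSpace (H' a')]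
    (I' : ∀ a', ModelWithCorners ℝ (E' a') (H' a'))
    (M' : G'.V → Type*) [∀ a', TopologicalSpace (M' a')] [∀ a', ChartedSpace (H' a') (M' a')]
    (x' : ∀ a', M' a') (v : TangentSpace (ModelWithCorners.pi I') x') :
    mfderiv (ModelWithCorners.pi I') (ModelWithCorners.pi fun a => I' (φ.vmap a))
      (Pmap M' φ) x' v = Pmap E' φ v := by
  rw [show Pmap M' φ = fun y a => y (φ.vmap a) from rfl,
    (hasMFDerivAt_reindex I' φ.vmap x').mfderiv]
  rfl

theorem pullbackCtrl_apply_Pmap {G G' : NetGraph} {φ : GraphHom G G'} (hφ : IsFibration φ)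
    (M' : G'.V → Type*) (E' : G'.V → Type*)
    (w' : ∀ a' : G'.V, (∀ v : (G'.inputTree a').V, M' ((G'.xi a').vmap v)) → E' a')
    (x' : ∀ a', M' a') (a : G.V) :
    pullbackCtrl hφ M' E' w' a (Pmap (fun b => M' (φ.vmap b)) (G.xi a) (Pmap M' φ x')) =
      w' (φ.vmap a) (Pmap M' (G'.xi (φ.vmap a)) x') := by
  refine congrArg (w' (φ.vmap a)) (funext fun v => ?_)
  rcases v with _ | e'
  · rfl
  · exact cast_eq_iff_heq.2
      (congr_arg_heq x' ((φ.src _).trans (congrArg G'.s (fibSection_spec hφ a e'))))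

theorem fibration_map_of_dynamical_systems_general {G G' : NetGraph} (φ : GraphHom G G')
    (hφ : IsFibration φ)
    (E' : G'.V → Type) [∀ a', NormedAddCommGroup (E' a')] [∀ a', NormedSpace ℝ (E' a')]
    (H' : G'.V → Type) [∀ a', TopologicalSpace (H' a')]
    (I' : ∀ a', ModelWithCorners ℝ (E' a') (H' a'))
    (M' : G'.V → Type) [∀ a', TopologicalSpace (M' a')] [∀ a', ChartedSpace (H' a') (M' a')]
    (w' : ∀ a' : G'.V, (∀ v : (G'.inputTree a').V, M' ((G'.xi a').vmap v)) → E' a') :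
    ∀ x' : ∀ a' : G'.V, M' a',
      mfderiv (ModelWithCorners.pi I') (ModelWithCorners.pi fun a => I' (φ.vmap a))
          (Pmap M' φ) x' (fun a' => w' a' (Pmap M' (G'.xi a') x')) =
        fun a : G.V => pullbackCtrl hφ M' E' w' a
          (Pmap (fun b => M' (φ.vmap b)) (G.xi a) (Pmap M' φ x')) := by
  intro x'
  calc _ = Pmap E' φ (fun a' => w' a' (Pmap M' (G'.xi a') x')) := mfderiv_Pmap φ E' H' I' M' x' _
    _ = _ := funext fun a => (pullbackCtrl_apply_Pmap hφ M' E' w' x' a).symm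

/-- main theorem: For a fibration `φ : (G,P) → (G',P')` of networks of
manifolds and a tuple `w' ∈ Ctrl(G',P')` of (smooth) open systems, the induced map
`ℙφ : ℙG' → ℙG` intertwines the interconnected vector fields:
`D(ℙφ) ∘ 𝓘'(w') = 𝓘(φ*w') ∘ ℙφ`, where the interconnected vector field `𝓘(w)` has
`a`-component `w_a ∘ ℙξ_a`.  Hence `ℙφ : (ℙG', 𝓘'(w')) → (ℙG, 𝓘(φ*w'))` is a map of
dynamical systems. -/
theorem fibration_map_of_dynamical_systems {G G' : NetGraph} (φ : GraphHom G G')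
    (hφ : IsFibration φ)
    (E' : G'.V → Type) [∀ a', NormedAddCommGroup (E' a')] [∀ a', NormedSpace ℝ (E' a')]
    (H' : G'.V → Type) [∀ a', TopologicalSpace (H' a')]
    (I' : ∀ a', ModelWithCorners ℝ (E' a') (H' a'))
    (M' : G'.V → Type) [∀ a', TopologicalSpace (M' a')] [∀ a', ChartedSpace (H' a') (M' a')]
    [∀ a', IsManifold (I' a') (⊤ : ℕ∞) (M' a')]
    (w' : ∀ a' : G'.V, (∀ v : (G'.inputTree a').V, M' ((G'.xi a').vmap v)) → E' a')
    (hw' : ∀ a' : G'.V, ContMDiff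
        (ModelWithCorners.pi fun v : (G'.inputTree a').V => I' ((G'.xi a').vmap v))
        (I' a').tangent (⊤ : ℕ∞)
        (fun y => (⟨y (Sum.inl ()), w' a' y⟩ : TangentBundle (I' a') (M' a')))) :
    ∀ x' : ∀ a' : G'.V, M' a',
      mfderiv (ModelWithCorners.pi I') (ModelWithCorners.pi fun a => I' (φ.vmap a))
          (Pmap M' φ) x' (fun a' => w' a' (Pmap M' (G'.xi a') x')) =
        fun a : G.V => pullbackCtrl hφ M' E' w' a
          (Pmap (fun b => M' (φ.vmap b)) (G.xi a) (Pmap M' φ x')) :=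
  fibration_map_of_dynamical_systems_general φ hφ E' H' I' M' w'
end
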